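/- arXiv:2404.09847 — 6 statements merged into one kernel-verified Lean document; each statement's English description precedes it below -/
import Mathlib

section
/- Let μ be a σ-finite measure on a measurable space W, and let π : {0,1} × W → ℝ and γ : {0,1} × {0,1} × W → ℝ be measurable with π(x,w) > 0, γ(m,x,w) > 0, π(0,w) + π(1,w) = 1, and γ(0,x,w) + γ(1,x,w) = 1 for all (x,w). Let P be the measure on {0,1} × {0,1} × W (coordinates (x,m,w)) having density (x,m,w) ↦ π(x,w)·γ(m,x,w) with respect to the product of counting measure on {0,1} × {0,1} and μ. Then for every measurable h : {0,1} × {0,1} × W → ℝ such that w ↦ h(x,m,w) is μ-integrable for each (x,m), ∫ [(2x−1)/π(x,w)]·[γ(m,0,w)/γ(m,x,w)]·h(x,m,w) dP(x,m,w) = ∫ Σ_{m∈{0,1}} (h(1,m,w) − h(0,m,w))·γ(m,0,w) dμ(w). -/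
/-! Against the density `π(x,w)·γ(m,x,w)` the inverse-probability weights cancel, leaving
`(2x-1)·γ(m,0,w)·h(x,m,w)` integrated against counting measure × μ; summing out `x` turns the
sign into the difference `h(1,m,w) - h(0,m,w)`. Each summand is integrable because `0 < γ ≤ 1`. -/

open MeasureTheory

namespace MeasureTheory

theorem integral_withDensity_ofReal {X E : Type*} [MeasurableSpace X] [NormedAddCommGroup E]
    [NormedSpace ℝ E] {μ : Measure X} {f : X → ℝ} (hf : AEMeasurable f μ) (hf0 : 0 ≤ᵐ[μ] f)
    (g : X → E) :
    ∫ x, g x ∂μ.withDensity (fun x => ENNReal.ofReal (f x)) = ∫ x, f x • g x ∂μ := by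
  rw [integral_withDensity_eq_integral_toReal_smul₀ hf.ennreal_ofReal
    (ae_of_all _ fun _ => ENNReal.ofReal_lt_top)]
  refine integral_congr_ae ?_
  filter_upwards [hf0] with x hx
  rw [ENNReal.toReal_ofReal hx]

namespace Measure

variable {ι α E : Type*} [Fintype ι] [MeasurableSpace ι] [MeasurableSpace α]

theorem count_prod_eq_sum_map (ρ : Measure α) [SFinite ρ] :
    (count : Measure ι).prod ρ = ∑ i, ρ.map (Prod.mk i) := by
  rw [count, prod_sum_left, sum_fintype]
  simp only [dirac_prod]

variable [MeasurableSingletonClass ι] [NormedAddCommGroup E] {ρ : Measure α} [SFinite ρ]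

theorem integrable_count_prod_iff {f : ι × α → E} :
    Integrable f ((count : Measure ι).prod ρ) ↔ ∀ i, Integrable (fun a => f (i, a)) ρ := by
  simp only [count_prod_eq_sum_map, integrable_finsetSum_measure, Finset.mem_univ, true_imp_iff,
    (measurableEmbedding_prodMk_left _).integrable_map_iff, Function.comp_def]

theorem integral_count_prod [NormedSpace ℝ E] {f : ι × α → E}
    (hf : ∀ i, Integrable (fun a => f (i, a)) ρ) :
    ∫ p, f p ∂(count : Measure ι).prod ρ = ∫ a, ∑ i, f (i, a) ∂ρ := by
  have hf' : ∀ i, Integrable f (ρ.map (Prod.mk i)) := fun i =>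
    (measurableEmbedding_prodMk_left i).integrable_map_iff.2 (hf i)
  rw [count_prod_eq_sum_map, integral_finsetSum_measure fun i _ => hf' i,
    integral_finsetSum _ fun i _ => hf i]
  simp only [(measurableEmbedding_prodMk_left _).integral_map]

end Measure

end MeasureTheory

theorem nde_constraint_gradient_ipw_general
    {W : Type*} [MeasurableSpace W] (μ : Measure W) [SigmaFinite μ]
    (π : Bool → W → ℝ) (γ : Bool → Bool → W → ℝ)
    (hπ : ∀ x, Measurable (π x)) (hγ : ∀ m x, Measurable (γ m x))
    (hπpos : ∀ x w, 0 < π x w) (hγpos : ∀ m x w, 0 < γ m x w)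
    (hγsum : ∀ x w, γ false x w + γ true x w = 1)
    (P : Measure (Bool × Bool × W))
    (hP : P = ((Measure.count : Measure Bool).prod
          ((Measure.count : Measure Bool).prod μ)).withDensity
        (fun p => ENNReal.ofReal (π p.1 p.2.2 * γ p.2.1 p.1 p.2.2)))
    (h : Bool → Bool → W → ℝ)
    (hint : ∀ x m, Integrable (h x m) μ) :
    (∫ p, ((if p.1 then (1 : ℝ) else -1) / π p.1 p.2.2)
        * (γ p.2.1 false p.2.2 / γ p.2.1 p.1 p.2.2) * h p.1 p.2.1 p.2.2 ∂P)
      = ∫ w, (∑ m : Bool, (h true m w - h false m w) * γ m false w) ∂μ := by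
  have hdensity : Measurable fun p : Bool × Bool × W => π p.1 p.2.2 * γ p.2.1 p.1 p.2.2 :=
    (measurable_from_prod_countable_right fun x => (hπ x).comp measurable_snd).mul
      (measurable_from_prod_countable_right fun x =>
        measurable_from_prod_countable_right fun m => hγ m x)
  have hγ_le_one : ∀ m x w, γ m x w ≤ 1 := by
    intro m x w
    cases m <;> linarith [hγsum x w, hγpos false x w, hγpos true x w]
  have hslice : ∀ x m,
      Integrable (fun w => (if x then (1 : ℝ) else -1) * (γ m false w * h x m w)) μ :=
    fun x m => ((hint x m).bdd_mul (hγ m false).aestronglyMeasurable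
      (ae_of_all _ fun w => by
        rw [Real.norm_of_nonneg (hγpos m false w).le]; exact hγ_le_one m false w)).const_mul _
  have hweight : ∀ p : Bool × Bool × W, (π p.1 p.2.2 * γ p.2.1 p.1 p.2.2) •
      (((if p.1 then (1 : ℝ) else -1) / π p.1 p.2.2)
        * (γ p.2.1 false p.2.2 / γ p.2.1 p.1 p.2.2) * h p.1 p.2.1 p.2.2)
      = (if p.1 then (1 : ℝ) else -1) * (γ p.2.1 false p.2.2 * h p.1 p.2.1 p.2.2) := by
    intro p
    have := (hπpos p.1 p.2.2).ne'
    have := (hγpos p.2.1 p.1 p.2.2).ne'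
    rw [smul_eq_mul]
    field_simp
  rw [hP, integral_withDensity_ofReal hdensity.aemeasurable
      (ae_of_all _ fun p => (mul_pos (hπpos _ _) (hγpos _ _ _)).le)]
  simp_rw [hweight]
  rw [Measure.integral_count_prod fun x => Measure.integrable_count_prod_iff.2 (hslice x),
    Measure.integral_count_prod fun m => integrable_finsetSum _ fun x _ => hslice x m]
  refine integral_congr_ae (ae_of_all _ fun w => Finset.sum_congr rfl fun m _ => ?_)
  simp only [Fintype.sum_bool, if_true, Bool.false_eq_true, if_false]
  ring

/-- The canonical gradient of the natural-direct-effect constraint is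
`[(2x-1)/π(x|w)]·[γ(m|0,w)/γ(m|x,w)]`: for `P` with density `π(x,w)·γ(m,x,w)` w.r.t.
(counting on `{0,1}×{0,1}`) × μ (coordinates `(x,m,w)`),
`∫ (2x-1)/π(x,w) · γ(m,0,w)/γ(m,x,w) · h(x,m,w) dP
  = ∫ Σ_m (h(1,m,w) - h(0,m,w)) γ(m,0,w) dμ`.
Here `x, m ∈ {0,1}` are encoded as `Bool` and `(2x-1)` as `if x then 1 else -1`. -/
theorem nde_constraint_gradient_ipw
    {W : Type*} [MeasurableSpace W] (μ : Measure W) [SigmaFinite μ]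
    (π : Bool → W → ℝ) (γ : Bool → Bool → W → ℝ)
    (hπ : ∀ x, Measurable (π x)) (hγ : ∀ m x, Measurable (γ m x))
    (hπpos : ∀ x w, 0 < π x w) (hγpos : ∀ m x w, 0 < γ m x w)
    (hπsum : ∀ w, π false w + π true w = 1)
    (hγsum : ∀ x w, γ false x w + γ true x w = 1)
    (P : Measure (Bool × Bool × W))
    (hP : P = ((Measure.count : Measure Bool).prod
          ((Measure.count : Measure Bool).prod μ)).withDensity
        (fun p => ENNReal.ofReal (π p.1 p.2.2 * γ p.2.1 p.1 p.2.2)))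
    (h : Bool → Bool → W → ℝ)
    (hm : Measurable (fun p : Bool × Bool × W => h p.1 p.2.1 p.2.2))
    (hint : ∀ x m, Integrable (h x m) μ) :
    (∫ p, ((if p.1 then (1 : ℝ) else -1) / π p.1 p.2.2)
        * (γ p.2.1 false p.2.2 / γ p.2.1 p.1 p.2.2) * h p.1 p.2.1 p.2.2 ∂P)
      = ∫ w, (∑ m : Bool, (h true m w - h false m w) * γ m false w) ∂μ :=
  nde_constraint_gradient_ipw_general μ π γ hπ hγ hπpos hγpos hγsum P hP h hint
end

section
/- Let μ be a probability measure on a measurable space W, and let ψ₀ : {0,1} × {0,1} × W → ℝ, π : {0,1} × W → ℝ, γ : {0,1} × {0,1} × W → ℝ be measurable with π(x,w) > 0 and γ(m,x,w) > 0 for all arguments. Assume the functions w ↦ Σ_{m∈{0,1}} (ψ₀(1,m,w) − ψ₀(0,m,w))·γ(m,0,w) and w ↦ Σ_{m∈{0,1}} [γ(m,0,w)²/(π(1,w)·γ(m,1,w)) + γ(m,0,w)/π(0,w)] are μ-integrable, with the integral of the latter nonzero. Define λ₀ = 2·[∫ Σ_m (ψ₀(1,m,w) − ψ₀(0,m,w))·γ(m,0,w)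 dμ(w)] / [∫ Σ_m (γ(m,0,w)²/(π(1,w)γ(m,1,w)) + γ(m,0,w)/π(0,w)) dμ(w)] and ψ*(x,m,w) = ψ₀(x,m,w) − λ₀·[(2x−1)/(2π(x,w))]·[γ(m,0,w)/γ(m,x,w)]. Then ∫ Σ_{m∈{0,1}} (ψ*(1,m,w) − ψ*(0,m,w))·γ(m,0,w) dμ(w) = 0. -/
open MeasureTheory

/-!
Subtracting `c` times the correction `(2x-1)/(2π(x,w)) · γ(m,0,w)/γ(m,x,w)` from a predictor
lowers the natural-direct-effect integrand by exactly `c/2` times the normalizer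
`Σ_m γ(m,0,w)²/(π(1,w)γ(m,1,w)) + γ(m,0,w)/π(0,w)`. Integrating, the constraint for `ψ*` is
`I₁ - (λ₀/2) I₂`, and `λ₀ = 2 I₁ / I₂` is the root of this affine function.
-/

namespace NDE

variable {W K : Type*} [Field K]

def integrand (ψ γ : Bool → Bool → W → K) (w : W) : K :=
  ∑ m : Bool, (ψ true m w - ψ false m w) * γ m false w

def normalizer (π : Bool → W → K) (γ : Bool → Bool → W → K) (w : W) : K :=
  ∑ m : Bool, (γ m false w ^ 2 / (π true w * γ m true w) + γ m false w / π false w)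

theorem integrand_sub (ψ φ γ : Bool → Bool → W → K) (w : W) :
    integrand (fun x m w => ψ x m w - φ x m w) γ w = integrand ψ γ w - integrand φ γ w := by
  simp only [integrand, ← Finset.sum_sub_distrib]
  exact Finset.sum_congr rfl fun m _ => by ring

theorem integrand_correction (π : Bool → W → K) (γ : Bool → Bool → W → K) (c : K) (w : W) :
    integrand (fun x m w => c * ((if x then (1 : K) else -1) / (2 * π x w))
      * (γ m false w / γ m x w)) γ w = c / 2 * normalizer π γ w := by
  simp only [integrand, normalizer, Finset.mul_sum, Bool.false_eq_true, if_true, if_false]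
  refine Finset.sum_congr rfl fun m _ => ?_
  -- the one cancellation, `a / a * a = a`, holds even at `a = 0` since `0⁻¹ = 0`
  linear_combination c / (2 * π false w) * div_self_mul_self (γ m false w)

end NDE

open NDE in
theorem nde_constraint_solved_by_closed_form_general
    {W : Type*} [MeasurableSpace W] (μ : Measure W)
    (ψ₀ : Bool → Bool → W → ℝ) (π : Bool → W → ℝ) (γ : Bool → Bool → W → ℝ)
    (hint₁ : Integrable
      (fun w => ∑ m : Bool, (ψ₀ true m w - ψ₀ false m w) * γ m false w) μ)
    (hint₂ : Integrable
      (fun w => ∑ m : Bool,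
        ((γ m false w) ^ 2 / (π true w * γ m true w) + γ m false w / π false w)) μ)
    (hne : (∫ w, (∑ m : Bool,
        ((γ m false w) ^ 2 / (π true w * γ m true w) + γ m false w / π false w)) ∂μ)
        ≠ 0) :
    let lam₀ : ℝ :=
      2 * (∫ w, (∑ m : Bool, (ψ₀ true m w - ψ₀ false m w) * γ m false w) ∂μ) /
        (∫ w, (∑ m : Bool,
          ((γ m false w) ^ 2 / (π true w * γ m true w) + γ m false w / π false w)) ∂μ)
    let ψs : Bool → Bool → W → ℝ :=
      fun x m w => ψ₀ x m w
        - lam₀ * ((if x then (1 : ℝ) else -1) / (2 * π x w)) * (γ m false w / γ m x w)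
    (∫ w, (∑ m : Bool, (ψs true m w - ψs false m w) * γ m false w) ∂μ) = 0 := by
  intro lam₀ ψs
  change Integrable (integrand ψ₀ γ) μ at hint₁
  change Integrable (normalizer π γ) μ at hint₂
  change ∫ w, normalizer π γ w ∂μ ≠ 0 at hne
  have hshift : ∀ w, integrand ψs γ w = integrand ψ₀ γ w - lam₀ / 2 * normalizer π γ w :=
    fun w => by rw [integrand_sub, integrand_correction]
  change ∫ w, integrand ψs γ w ∂μ = 0
  simp only [hshift]
  rw [integral_sub hint₁ (hint₂.const_mul _), integral_const_mul]
  change _ - 2 * (∫ w, integrand ψ₀ γ w ∂μ) / (∫ w, normalizer π γ w ∂μ) / 2 * _ = 0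
  field_simp
  ring

/-- The closed-form Lagrange multiplier `λ₀` makes the natural-direct-effect
constraint vanish for
`ψ*(x,m,w) = ψ₀(x,m,w) - λ₀ [(2x-1)/(2π(x,w))]·[γ(m,0,w)/γ(m,x,w)]` under MSE risk.
Here `x, m ∈ {0,1}` are encoded as `Bool` and `(2x-1)` as `if x then 1 else -1`. -/
theorem nde_constraint_solved_by_closed_form
    {W : Type*} [MeasurableSpace W] (μ : Measure W) [IsProbabilityMeasure μ]
    (ψ₀ : Bool → Bool → W → ℝ) (π : Bool → W → ℝ) (γ : Bool → Bool → W → ℝ)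
    (hψ₀ : ∀ x m, Measurable (ψ₀ x m)) (hπ : ∀ x, Measurable (π x))
    (hγ : ∀ m x, Measurable (γ m x))
    (hπpos : ∀ x w, 0 < π x w) (hγpos : ∀ m x w, 0 < γ m x w)
    (hint₁ : Integrable
      (fun w => ∑ m : Bool, (ψ₀ true m w - ψ₀ false m w) * γ m false w) μ)
    (hint₂ : Integrable
      (fun w => ∑ m : Bool,
        ((γ m false w) ^ 2 / (π true w * γ m true w) + γ m false w / π false w)) μ)
    (hne : (∫ w, (∑ m : Bool,
        ((γ m false w) ^ 2 / (π true w * γ m true w) + γ m false w / π false w)) ∂μ)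
        ≠ 0) :
    let lam₀ : ℝ :=
      2 * (∫ w, (∑ m : Bool, (ψ₀ true m w - ψ₀ false m w) * γ m false w) ∂μ) /
        (∫ w, (∑ m : Bool,
          ((γ m false w) ^ 2 / (π true w * γ m true w) + γ m false w / π false w)) ∂μ)
    let ψs : Bool → Bool → W → ℝ :=
      fun x m w => ψ₀ x m w
        - lam₀ * ((if x then (1 : ℝ) else -1) / (2 * π x w)) * (γ m false w / γ m x w)
    (∫ w, (∑ m : Bool, (ψs true m w - ψs false m w) * γ m false w) ∂μ) = 0 :=
  nde_constraint_solved_by_closed_form_general μ ψ₀ π γ hint₁ hint₂ hne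
end

section
/- Let s ∈ {−1, 1}, k > 0, and set c = s·k. Let ψ₀ ∈ (0,1) and λ ∈ ℝ with λ ≠ 0. Then the discriminant D = (λ + 1/c)² − 4λψ₀/c is nonnegative, and y = (λ + 1/c − s·√D)/(2λ) is the unique element of the open interval (0,1) satisfying the quadratic equation λ·c·y² − (1 + λ·c)·y + ψ₀ = 0. -/
/-!
Put `a = λc`. The quadratic `f(y) = a y² - (1 + a) y + ψ₀` has `f(0) = ψ₀ > 0` and
`f(1) = ψ₀ - 1 < 0`. Its discriminant `Δ = (1 + a)² - 4aψ₀` equals `(2ψ₀ - 1 - a)² + 4ψ₀(1 - ψ₀)`,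
so `q = √Δ > 2ψ₀ - 1 - a`, and the root written as `2ψ₀ / (1 + a + q)` visibly lies in `(0, 1)`;
the paper's `D` is `Δ / c²`, and since `s c = |c|` its closed form is this root. Two distinct roots
`z, w` would give `f(0) f(1) = a² z w (1 - z)(1 - w)`, which cannot be negative when `z, w ∈ (0, 1)`.
-/

open Set

section CrossEntropyQuadratic

variable {a ψ : ℝ}

theorem sq_two_mul_sub_add_lt_discrim (hψ : ψ ∈ Ioo (0 : ℝ) 1) :
    (2 * ψ - 1 - a) ^ 2 < (1 + a) ^ 2 - 4 * a * ψ := by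
  have hsplit : (1 + a) ^ 2 - 4 * a * ψ = (2 * ψ - 1 - a) ^ 2 + 4 * ψ * (1 - ψ) := by ring
  have : 0 < 4 * ψ * (1 - ψ) := by nlinarith [hψ.1, hψ.2]
  linarith

theorem discrim_pos (hψ : ψ ∈ Ioo (0 : ℝ) 1) : 0 < (1 + a) ^ 2 - 4 * a * ψ :=
  (sq_nonneg _).trans_lt (sq_two_mul_sub_add_lt_discrim hψ)

theorem two_mul_lt_one_add_add_sqrt_discrim (hψ : ψ ∈ Ioo (0 : ℝ) 1) :
    2 * ψ < 1 + a + √((1 + a) ^ 2 - 4 * a * ψ) := by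
  have : 2 * ψ - 1 - a < √((1 + a) ^ 2 - 4 * a * ψ) :=
    calc 2 * ψ - 1 - a ≤ |2 * ψ - 1 - a| := le_abs_self _
      _ = √((2 * ψ - 1 - a) ^ 2) := (Real.sqrt_sq_eq_abs _).symm
      _ < √((1 + a) ^ 2 - 4 * a * ψ) :=
        Real.sqrt_lt_sqrt (sq_nonneg _) (sq_two_mul_sub_add_lt_discrim hψ)
  linarith

theorem two_mul_div_add_sqrt_discrim_mem_Ioo (hψ : ψ ∈ Ioo (0 : ℝ) 1) :
    2 * ψ / (1 + a + √((1 + a) ^ 2 - 4 * a * ψ)) ∈ Ioo (0 : ℝ) 1 := by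
  have hlt := two_mul_lt_one_add_add_sqrt_discrim (a := a) hψ
  have hψ2 : 0 < 2 * ψ := by linarith [hψ.1]
  exact ⟨div_pos hψ2 (hψ2.trans hlt), (div_lt_one (hψ2.trans hlt)).2 hlt⟩

theorem quadratic_eq_zero_of_eq_two_mul_div {q : ℝ} (hq : q ^ 2 = (1 + a) ^ 2 - 4 * a * ψ)
    (hp : 1 + a + q ≠ 0) :
    a * (2 * ψ / (1 + a + q)) ^ 2 - (1 + a) * (2 * ψ / (1 + a + q)) + ψ = 0 := by
  field_simp
  linear_combination ψ * hq

theorem sub_div_two_mul_eq_two_mul_div {q : ℝ} (ha : a ≠ 0)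
    (hq : q ^ 2 = (1 + a) ^ 2 - 4 * a * ψ) (hp : 1 + a + q ≠ 0) :
    (1 + a - q) / (2 * a) = 2 * ψ / (1 + a + q) := by
  rw [div_eq_div_iff (mul_ne_zero two_ne_zero ha) hp]
  linear_combination -hq

end CrossEntropyQuadratic

theorem eq_of_quadratic_roots_mem_Ioo {a b c z w : ℝ} (hc : 0 < c) (h1 : a + b + c < 0)
    (hz : z ∈ Ioo (0 : ℝ) 1) (hw : w ∈ Ioo (0 : ℝ) 1)
    (hzr : a * z ^ 2 + b * z + c = 0) (hwr : a * w ^ 2 + b * w + c = 0) : z = w := by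
  by_contra hzw
  have hsum : a * (z + w) + b = 0 :=
    mul_left_cancel₀ (sub_ne_zero.2 hzw) (by linear_combination hzr - hwr)
  have hprod : c = a * z * w := by linear_combination hzr - z * hsum
  have hone : a + b + c = a * (1 - z) * (1 - w) := by linear_combination hprod + hsum
  have hvieta : c * (a + b + c) = a ^ 2 * (z * w * ((1 - z) * (1 - w))) := by
    rw [hone, hprod]; ring
  have hzw01 : 0 < z * w * ((1 - z) * (1 - w)) :=
    mul_pos (mul_pos hz.1 hw.1) (mul_pos (sub_pos.2 hz.2) (sub_pos.2 hw.2))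
  exact (mul_neg_of_pos_of_neg hc h1).not_ge (hvieta ▸ mul_nonneg (sq_nonneg a) hzw01.le)

/-- Under cross-entropy risk, the stationarity equation
`λ c y² - (1 + λ c) y + ψ₀ = 0` has a nonnegative discriminant and exactly one
solution `y` in `(0,1)`, given in closed form; here `c = s·k` with sign
`s ∈ {-1, 1}` and magnitude `k > 0`. -/
theorem cross_entropy_quadratic_unique_root
    (s k : ℝ) (hs : s = -1 ∨ s = 1) (hk : 0 < k)
    (c : ℝ) (hc : c = s * k)
    (ψ₀ : ℝ) (hψ₀ : ψ₀ ∈ Set.Ioo (0 : ℝ) 1)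
    (lam : ℝ) (hlam : lam ≠ 0) :
    0 ≤ (lam + 1 / c) ^ 2 - 4 * lam * ψ₀ / c ∧
    (let D : ℝ := (lam + 1 / c) ^ 2 - 4 * lam * ψ₀ / c
     let y : ℝ := (lam + 1 / c - s * Real.sqrt D) / (2 * lam)
     y ∈ Set.Ioo (0 : ℝ) 1 ∧
     lam * c * y ^ 2 - (1 + lam * c) * y + ψ₀ = 0 ∧
     ∀ z ∈ Set.Ioo (0 : ℝ) 1,
       lam * c * z ^ 2 - (1 + lam * c) * z + ψ₀ = 0 → z = y) := by
  have hsc : s * c = |c| := by rcases hs with rfl | rfl <;> simp [hc, abs_of_pos hk]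
  have hc0 : c ≠ 0 := by rcases hs with rfl | rfl <;> simp [hc, hk.ne']
  set a := lam * c
  set Δ := (1 + a) ^ 2 - 4 * a * ψ₀
  have hD : (lam + 1 / c) ^ 2 - 4 * lam * ψ₀ / c = Δ / c ^ 2 := by field_simp; ring
  have hq : √Δ ^ 2 = Δ := Real.sq_sqrt (discrim_pos hψ₀).le
  have hp : 1 + a + √Δ ≠ 0 := by
    linarith [two_mul_lt_one_add_add_sqrt_discrim (a := a) hψ₀, hψ₀.1]
  have hy : (lam + 1 / c - s * √(Δ / c ^ 2)) / (2 * lam) = 2 * ψ₀ / (1 + a + √Δ) := by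
    have hsqrt : s * c * √(Δ / c ^ 2) = √Δ := by
      rw [hsc, Real.sqrt_div' _ (sq_nonneg c), Real.sqrt_sq_eq_abs]
      field_simp
    rw [← sub_div_two_mul_eq_two_mul_div (mul_ne_zero hlam hc0) hq hp, ← hsqrt]
    field_simp
    ring
  refine ⟨hD ▸ div_nonneg (discrim_pos hψ₀).le (sq_nonneg c), ?_⟩
  simp only [hD, hy]
  have hroot := quadratic_eq_zero_of_eq_two_mul_div hq hp
  refine ⟨two_mul_div_add_sqrt_discrim_mem_Ioo hψ₀, hroot, fun z hz hzr => ?_⟩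
  exact eq_of_quadratic_roots_mem_Ioo (a := a) (b := -(1 + a)) hψ₀.1 (by linarith [hψ₀.2])
    hz (two_mul_div_add_sqrt_discrim_mem_Ioo hψ₀) (by linear_combination hzr)
    (by linear_combination hroot)
end

section
/- Let ψ₀ ∈ (0,1), c ∈ ℝ, and λ ∈ ℝ with 1 + λc > 0. Define ψ = ψ₀·(1 + λc)/(1 + λc·ψ₀). Then 1 + λc·ψ₀ > 0, ψ ∈ (0,1), and (1 − ψ₀)/(1 − ψ) − ψ₀/ψ − λc·ψ₀/ψ = 0. -/
/-!
Write `a = λc` and `d = 1 + a ψ₀`. Then `d = (1 - ψ₀) + ψ₀ (1 + a)` is a convex combination of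
positive numbers, and `1 - ψ = (1 - ψ₀) / d`, so the path multiplies the odds of `ψ₀` by `1 + a`.
Both terms of the stationarity equation then equal `d`: `(1 - ψ₀) / (1 - ψ) = d` and
`(1 + a) ψ₀ / ψ = d`.
-/

section TiltedOdds

variable {p a : ℝ}

lemma one_add_mul_pos_of_mem_Icc (hp : p ∈ Set.Icc (0 : ℝ) 1) (ha : 0 < 1 + a) :
    0 < 1 + a * p := by
  obtain ⟨hp0, hp1⟩ := hp
  nlinarith [mul_nonneg hp0 ha.le]

lemma one_sub_tilt (hd : 1 + a * p ≠ 0) :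
    1 - p * (1 + a) / (1 + a * p) = (1 - p) / (1 + a * p) := by
  rw [eq_div_iff hd, sub_mul, div_mul_cancel₀ _ hd]
  ring

lemma tilt_mem_Ioo (hp : p ∈ Set.Ioo (0 : ℝ) 1) (ha : 0 < 1 + a) :
    p * (1 + a) / (1 + a * p) ∈ Set.Ioo (0 : ℝ) 1 := by
  obtain ⟨hp0, hp1⟩ := hp
  have hd : 0 < 1 + a * p := one_add_mul_pos_of_mem_Icc ⟨hp0.le, hp1.le⟩ ha
  refine ⟨by positivity, ?_⟩
  have hcomplement_pos : 0 < 1 - p * (1 + a) / (1 + a * p) := by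
    rw [one_sub_tilt hd.ne']
    exact div_pos (by linarith) hd
  linarith

lemma tilt_stationary (hp : p ∈ Set.Ioo (0 : ℝ) 1) (ha : 0 < 1 + a) :
    (1 - p) / (1 - p * (1 + a) / (1 + a * p)) - p / (p * (1 + a) / (1 + a * p))
      - a * p / (p * (1 + a) / (1 + a * p)) = 0 := by
  obtain ⟨hp0, hp1⟩ := hp
  have hd : 0 < 1 + a * p := one_add_mul_pos_of_mem_Icc ⟨hp0.le, hp1.le⟩ ha
  have hcomplement : (1 - p) / (1 - p * (1 + a) / (1 + a * p)) = 1 + a * p := by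
    rw [one_sub_tilt hd.ne', div_div_eq_mul_div, mul_div_cancel_left₀ _ (by linarith)]
  have hratio : p / (p * (1 + a) / (1 + a * p)) + a * p / (p * (1 + a) / (1 + a * p))
      = 1 + a * p := by
    rw [← add_div, div_div_eq_mul_div, ← one_add_mul, mul_comm (1 + a) p,
      mul_div_cancel_left₀ _ (by positivity)]
  linarith

end TiltedOdds

/-- Closed-form constraint-specific path for the "equalized risk among the cases"
constraint under cross-entropy risk: `ψ = ψ₀(1 + λc)/(1 + λcψ₀)` is a valid
probability and solves the stationarity equation
`(1-ψ₀)/(1-ψ) - ψ₀/ψ - λc·ψ₀/ψ = 0`. -/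
theorem equalized_risk_cases_path
    (ψ₀ c lam : ℝ) (hψ₀ : ψ₀ ∈ Set.Ioo (0 : ℝ) 1) (hpos : 0 < 1 + lam * c) :
    0 < 1 + lam * c * ψ₀ ∧
    (let ψ : ℝ := ψ₀ * (1 + lam * c) / (1 + lam * c * ψ₀)
     ψ ∈ Set.Ioo (0 : ℝ) 1 ∧
     (1 - ψ₀) / (1 - ψ) - ψ₀ / ψ - lam * c * ψ₀ / ψ = 0) :=
  ⟨one_add_mul_pos_of_mem_Icc (Set.Ioo_subset_Icc_self hψ₀) hpos,
    tilt_mem_Ioo hψ₀ hpos, tilt_stationary hψ₀ hpos⟩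
end

section
/- Let p₁ > 0, p₀ > 0, and λ ∈ (−p₁, p₀). Then for every ψ₀ ∈ [0,1]: the denominators 1 + λψ₀/p₁ and 1 − λψ₀/p₀ are strictly positive, and both 0 ≤ ψ₀·(1 + λ/p₁)/(1 + λψ₀/p₁) ≤ 1 and 0 ≤ ψ₀·(1 − λ/p₀)/(1 − λψ₀/p₀) ≤ 1. -/
/-- Validity of the equalized-risk-among-the-cases constrained solution: for
`-p₁ < λ < p₀`, the closed-form expression stays a valid probability in `[0,1]`
for every baseline probability `ψ₀ ∈ [0,1]`. -/
theorem equalized_risk_cases_valid_probability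
    (p₁ p₀ lam : ℝ) (hp₁ : 0 < p₁) (hp₀ : 0 < p₀)
    (hlam : lam ∈ Set.Ioo (-p₁) p₀) :
    ∀ ψ₀ ∈ Set.Icc (0 : ℝ) 1,
      0 < 1 + lam * ψ₀ / p₁ ∧
      0 < 1 - lam * ψ₀ / p₀ ∧
      (0 ≤ ψ₀ * (1 + lam / p₁) / (1 + lam * ψ₀ / p₁) ∧
        ψ₀ * (1 + lam / p₁) / (1 + lam * ψ₀ / p₁) ≤ 1) ∧
      (0 ≤ ψ₀ * (1 - lam / p₀) / (1 - lam * ψ₀ / p₀) ∧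
        ψ₀ * (1 - lam / p₀) / (1 - lam * ψ₀ / p₀) ≤ 1) := by
  obtain ⟨h1, h2⟩ := hlam
  rintro ψ₀ ⟨h0, hψ1⟩
  have key1 : 0 < p₁ + lam * ψ₀ := by
    rcases le_or_gt 0 lam with h | h
    · nlinarith
    · nlinarith
  have key2 : 0 < p₀ - lam * ψ₀ := by
    rcases le_or_gt 0 lam with h | h
    · nlinarith
    · nlinarith
  have hd1 : 0 < 1 + lam * ψ₀ / p₁ := by
    have : 1 + lam * ψ₀ / p₁ = (p₁ + lam * ψ₀) / p₁ := by field_simp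
    rw [this]; exact div_pos key1 hp₁
  have hd2 : 0 < 1 - lam * ψ₀ / p₀ := by
    have : 1 - lam * ψ₀ / p₀ = (p₀ - lam * ψ₀) / p₀ := by field_simp
    rw [this]; exact div_pos key2 hp₀
  have hn1 : 0 ≤ 1 + lam / p₁ := by
    have : -1 < lam / p₁ := by
      rw [lt_div_iff₀ hp₁]; nlinarith
    linarith
  have hn2 : 0 ≤ 1 - lam / p₀ := by
    have : lam / p₀ < 1 := (div_lt_one hp₀).mpr h2
    linarith
  have e1 : lam * ψ₀ / p₁ = ψ₀ * (lam / p₁) := by ring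
  have e2 : lam * ψ₀ / p₀ = ψ₀ * (lam / p₀) := by ring
  refine ⟨hd1, hd2, ⟨div_nonneg (by positivity) hd1.le, ?_⟩,
    ⟨div_nonneg (by positivity) hd2.le, ?_⟩⟩
  · rw [div_le_one hd1, e1]; nlinarith
  · rw [div_le_one hd2, e2]; nlinarith
end

section
/- Let ψ₀ ∈ (0,1) and a, b ∈ ℝ with 1 + a > 0 and 1 + b > 0. Set p₁ = ψ₀, p₀ = 1 − ψ₀, D = 1 + a·p₁ + b·p₀, q₁ = p₁·(1 + a)/D, and q₀ = p₀·(1 + b)/D. Then D > 0, q₁ ∈ (0,1), q₀ ∈ (0,1), q₁ + q₀ = 1, and for each y ∈ {0,1}: (q_y − p_y)/q_y − a·(p₁/q₁)·(𝟙{y = 1} − q₁) − b·(p₀/q₀)·(𝟙{y = 0} − q₀) = 0, where q_y and p_y denote q₁, p₁ if y = 1 and q₀, p₀ if y = 0, and 𝟙 denotes the indicator function. -/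
/-! The tilted probabilities satisfy `(1 + a) · p₁ / q₁ = D = (1 + b) · p₀ / q₀`. Substituting
these likelihood ratios, each component of the stationarity equation collapses to
`1 - D + a p₁ + b p₀`, which vanishes by the definition of `D`. -/

section TwoPointTilt

variable {p₁ p₀ a b : ℝ}

lemma tilt_normalizer_pos (hp₁ : 0 < p₁) (hp₀ : 0 < p₀) (ha : 0 < 1 + a) (hb : 0 < 1 + b)
    (hsum : p₁ + p₀ = 1) : 0 < 1 + a * p₁ + b * p₀ := by
  have hD : 1 + a * p₁ + b * p₀ = (1 + a) * p₁ + (1 + b) * p₀ := by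
    linear_combination -hsum
  rw [hD]
  positivity

lemma tilted_add_tilted (hsum : p₁ + p₀ = 1) (hD : 1 + a * p₁ + b * p₀ ≠ 0) :
    p₁ * (1 + a) / (1 + a * p₁ + b * p₀) + p₀ * (1 + b) / (1 + a * p₁ + b * p₀) = 1 := by
  rw [← add_div, div_eq_one_iff_eq hD]
  linear_combination hsum

lemma one_add_mul_div_tilted {p t : ℝ} (D : ℝ) (hp : p ≠ 0) (ht : 1 + t ≠ 0) :
    (1 + t) * (p / (p * (1 + t) / D)) = D := by
  field_simp

lemma stationarity_of_likelihood_ratio {q₁ q₀ : ℝ} (hq₁ : q₁ ≠ 0) (hq₀ : q₀ ≠ 0)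
    (hratio : (1 + a) * (p₁ / q₁) = 1 + a * p₁ + b * p₀) :
    (q₁ - p₁) / q₁ - a * (p₁ / q₁) * (1 - q₁) - b * (p₀ / q₀) * (0 - q₀) = 0 := by
  have hr : p₁ / q₁ * q₁ = p₁ := div_mul_cancel₀ p₁ hq₁
  have hs : p₀ / q₀ * q₀ = p₀ := div_mul_cancel₀ p₀ hq₀
  rw [sub_div, div_self hq₁]
  linear_combination -hratio + a * hr + b * hs

end TwoPointTilt

/-- Closed-form solution for the two-dimensional "equalized risk in the cases and
controls" constraint under cross-entropy risk: the tilted probabilities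
`q₁ = p₁(1+a)/D`, `q₀ = p₀(1+b)/D` with `D = 1 + a p₁ + b p₀` form a valid
probability distribution on `{0,1}` and solve the vector stationarity equation
pointwise. The binary outcome `y ∈ {0,1}` is encoded as `Bool`. -/
theorem equalized_risk_cases_controls_path
    (ψ₀ a b : ℝ) (hψ₀ : ψ₀ ∈ Set.Ioo (0 : ℝ) 1)
    (ha : 0 < 1 + a) (hb : 0 < 1 + b) :
    let p₁ : ℝ := ψ₀
    let p₀ : ℝ := 1 - ψ₀
    let D : ℝ := 1 + a * p₁ + b * p₀
    let q₁ : ℝ := p₁ * (1 + a) / D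
    let q₀ : ℝ := p₀ * (1 + b) / D
    0 < D ∧ q₁ ∈ Set.Ioo (0 : ℝ) 1 ∧ q₀ ∈ Set.Ioo (0 : ℝ) 1 ∧ q₁ + q₀ = 1 ∧
    ∀ y : Bool,
      ((if y then q₁ else q₀) - (if y then p₁ else p₀)) / (if y then q₁ else q₀)
        - a * (p₁ / q₁) * ((if y then (1 : ℝ) else 0) - q₁)
        - b * (p₀ / q₀) * ((if y then (0 : ℝ) else 1) - q₀) = 0 := by
  intro p₁ p₀ D q₁ q₀
  obtain ⟨hp₁, hψ₁⟩ := hψ₀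
  have hp₀ : 0 < p₀ := sub_pos.2 hψ₁
  have hsum : p₁ + p₀ = 1 := add_sub_cancel ψ₀ 1
  have hD : 0 < D := tilt_normalizer_pos hp₁ hp₀ ha hb hsum
  have hq₁ : 0 < q₁ := div_pos (mul_pos hp₁ ha) hD
  have hq₀ : 0 < q₀ := div_pos (mul_pos hp₀ hb) hD
  have hq : q₁ + q₀ = 1 := tilted_add_tilted hsum hD.ne'
  have hratio₁ : (1 + a) * (p₁ / q₁) = D := one_add_mul_div_tilted D hp₁.ne' ha.ne'
  have hratio₀ : (1 + b) * (p₀ / q₀) = 1 + b * p₀ + a * p₁ := by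
    rw [one_add_mul_div_tilted D hp₀.ne' hb.ne']
    ring
  clear_value q₁ q₀
  refine ⟨hD, ⟨hq₁, by linarith⟩, ⟨hq₀, by linarith⟩, hq, ?_⟩
  rintro (_ | _) <;> simp only [Bool.false_eq_true, ite_true, ite_false]
  · -- the controls component is the cases component with the two classes swapped
    linear_combination stationarity_of_likelihood_ratio hq₀.ne' hq₁.ne' hratio₀
  · exact stationarity_of_likelihood_ratio hq₁.ne' hq₀.ne' hratio₁
end
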